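/- For every integer n ≥ 1, with l := x_0^{-2} x_1 x_0^{n+1} x_1^{-n} and r := x_0^2 l in Thompson's group F, there exists a path from l to r of length 4n + 4 inside the ball B_{2n+2} that passes through the identity element of F; one such path is given by successively left-multiplying l by the letters of the word (x_1 x_0^{n+1})(x_1^{-n} x_0^{-1})(x_1^{-1} x_0 x_1^{n-1})(x_1 x_0^{1-n}), read from right to left. -/

import Mathlib

/-!
Using only the relation `x₀^{-(n+1)} x₁ x₀^{n+1} = x_{n+2} = x₁^{-n} (x₀⁻¹ x₁ x₀) x₁ⁿ`, `l` is
the product of the word `x₀^{n-1} x₁^{-n} x₀⁻¹ x₁ x₀` of length `2n + 2`, and the first `2n + 2`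
letters of the given word are the inverses of its letters. So the first half of the path erases
this word letter by letter down to `1`, and the second half spells `r = x₁ x₀^{n+1} x₁^{-n}` from
the right. Every vertex is therefore the product of at most `2n + 2` generators.
-/

namespace ThompsonF

/-- The defining relators of Thompson's group `F`:
for `i < j`, the relator `x_i⁻¹ * x_j * x_i * x_{j+1}⁻¹`. -/
def rels : Set (FreeGroup ℕ) :=
  {r | ∃ i j : ℕ, i < j ∧
    r = (FreeGroup.of i)⁻¹ * FreeGroup.of j * FreeGroup.of i * (FreeGroup.of (j + 1))⁻¹}

/-- Thompson's group `F`, presented by `⟨x₀, x₁, … ∣ x_i⁻¹ x_j x_i = x_{j+1} for i < j⟩`. -/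
abbrev F : Type := PresentedGroup rels

/-- The generator `x_i` of Thompson's group `F`. -/
def x (i : ℕ) : F := PresentedGroup.of i

/-- The symmetrized generating set `{x₀, x₀⁻¹, x₁, x₁⁻¹}`. -/
def gens : Set F := {x 0, (x 0)⁻¹, x 1, (x 1)⁻¹}

/-- The word length `ℓ(g)` with respect to `{x₀, x₁}`: the least `m` such that `g` is a
product of `m` elements of `{x₀, x₀⁻¹, x₁, x₁⁻¹}`. -/
noncomputable def len (g : F) : ℕ :=
  sInf {m | ∃ w : List F, w.length = m ∧ (∀ a ∈ w, a ∈ gens) ∧ w.prod = g}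

/-- `IsPathIn n f g m c` means `c 0 = f, c 1, …, c m = g` is a path of length `m`
from `f` to `g` inside the ball `B_n`: consecutive vertices differ by left
multiplication by a generator, and every vertex has length at most `n`. -/
def IsPathIn (n : ℕ) (f g : F) (m : ℕ) (c : ℕ → F) : Prop :=
  c 0 = f ∧ c m = g ∧ (∀ k < m, c (k + 1) * (c k)⁻¹ ∈ gens) ∧ ∀ k ≤ m, len (c k) ≤ n

/-- The element `l = x₀⁻² x₁ x₀^{n+1} x₁⁻ⁿ`. -/
def l (n : ℕ) : F := x 0 ^ (-2 : ℤ) * x 1 * x 0 ^ ((n : ℤ) + 1) * x 1 ^ (-(n : ℤ))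

/-- The element `r = x₀² l`. -/
def r (n : ℕ) : F := x 0 ^ 2 * l n

/-- The word `(x₁ x₀^{n+1})(x₁⁻ⁿ x₀⁻¹)(x₁⁻¹ x₀ x₁^{n-1})(x₁ x₀^{1-n})`,
listed in right-to-left (application) order. -/
noncomputable def word6 (n : ℕ) : List F :=
  List.replicate (n - 1) (x 0)⁻¹ ++ [x 1] ++ List.replicate (n - 1) (x 1) ++ [x 0] ++
    [(x 1)⁻¹] ++ [(x 0)⁻¹] ++ List.replicate n (x 1)⁻¹ ++
    List.replicate (n + 1) (x 0) ++ [x 1]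

end ThompsonF

namespace List

variable {G : Type*} [Group G]

theorem prod_reverse_take_map_inv_append_mul_prod (u v : List G) (k : ℕ) :
    ((u.map (·⁻¹) ++ v).take k).reverse.prod * u.prod =
      (v.take (k - u.length)).reverse.prod * (u.drop k).prod := by
  have hu : ((u.map (·⁻¹)).take k).reverse.prod * (u.take k).prod = 1 := by
    rw [← map_take, ← prod_inv_reverse, inv_mul_cancel]
  rw [take_append, reverse_append, prod_append, length_map, ← prod_take_mul_prod_drop u k,
    mul_assoc, ← mul_assoc _ (u.take k).prod, hu, one_mul]

theorem prod_reverse_take_add_one_mul_inv (w : List G) (g : G) {k : ℕ} (hk : k < w.length) :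
    (w.take (k + 1)).reverse.prod * g * ((w.take k).reverse.prod * g)⁻¹ = w[k] := by
  simp only [take_add_one, getElem?_eq_getElem hk, Option.toList_some, reverse_append,
    reverse_singleton, prod_append, prod_singleton]
  group

end List

namespace ThompsonF

open List

theorem inv_x_mul_x_mul_x {i j : ℕ} (h : i < j) : (x i)⁻¹ * x j * x i = x (j + 1) := by
  simpa only [x, PresentedGroup.of, map_mul, map_inv] using
    PresentedGroup.mk_eq_mk_of_mul_inv_mem (rels := rels) ⟨i, j, h, rfl⟩

theorem inv_x_pow_mul_x_mul_x_pow {i j : ℕ} (h : i < j) (m : ℕ) :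
    (x i ^ m)⁻¹ * x j * x i ^ m = x (j + m) := by
  induction m with
  | zero => simp
  | succ m ih =>
    calc (x i ^ (m + 1))⁻¹ * x j * x i ^ (m + 1)
        = (x i)⁻¹ * ((x i ^ m)⁻¹ * x j * x i ^ m) * x i := by group
      _ = x (j + (m + 1)) := by rw [ih, inv_x_mul_x_mul_x (by omega), add_assoc]

theorem inv_mem_gens {a : F} (ha : a ∈ gens) : a⁻¹ ∈ gens := by
  rcases ha with rfl | rfl | rfl | rfl <;> simp [gens]

theorem len_prod_le {w : List F} (hw : ∀ a ∈ w, a ∈ gens) : len w.prod ≤ w.length :=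
  Nat.sInf_le ⟨w, rfl, hw, rfl⟩

noncomputable def wordL (n : ℕ) : List F :=
  replicate (n - 1) (x 0) ++ replicate n (x 1)⁻¹ ++ [(x 0)⁻¹, x 1, x 0]

/-- Listed in application order, like `word6`: `r n` is the product of its reverse. -/
noncomputable def wordR (n : ℕ) : List F :=
  replicate n (x 1)⁻¹ ++ replicate (n + 1) (x 0) ++ [x 1]

theorem length_wordL {n : ℕ} (hn : 1 ≤ n) : (wordL n).length = 2 * n + 2 := by
  simp only [wordL, length_append, length_replicate, length_cons, length_nil]; omega

theorem length_wordR (n : ℕ) : (wordR n).length = 2 * n + 2 := by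
  simp only [wordR, length_append, length_replicate, length_cons, length_nil]; omega

theorem wordL_subset_gens (n : ℕ) : ∀ a ∈ wordL n, a ∈ gens := by
  intro a ha
  simp only [wordL, mem_append, mem_replicate, mem_cons, not_mem_nil, or_false] at ha
  rcases ha with ((⟨-, rfl⟩ | ⟨-, rfl⟩) | rfl | rfl | rfl) <;> simp [gens]

theorem wordR_subset_gens (n : ℕ) : ∀ a ∈ wordR n, a ∈ gens := by
  intro a ha
  simp only [wordR, mem_append, mem_replicate, mem_singleton] at ha
  rcases ha with ((⟨-, rfl⟩ | ⟨-, rfl⟩) | rfl) <;> simp [gens]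

theorem prod_wordL {n : ℕ} (hn : 1 ≤ n) : (wordL n).prod = l n := by
  obtain ⟨m, rfl⟩ : ∃ m, n = m + 1 := ⟨n - 1, by omega⟩
  have hconj : (x 0 ^ (m + 2))⁻¹ * x 1 * x 0 ^ (m + 2) =
      (x 1 ^ (m + 1))⁻¹ * ((x 0)⁻¹ * x 1 * x 0) * x 1 ^ (m + 1) := by
    rw [inv_x_pow_mul_x_mul_x_pow zero_lt_one, inv_x_mul_x_mul_x zero_lt_one,
      inv_x_pow_mul_x_mul_x_pow (show 1 < 1 + 1 by omega)]
    congr 1; omega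
  calc (wordL (m + 1)).prod
      = x 0 ^ m * ((x 1 ^ (m + 1))⁻¹ * ((x 0)⁻¹ * x 1 * x 0) * x 1 ^ (m + 1)) *
          (x 1 ^ (m + 1))⁻¹ := by
          simp only [wordL, Nat.add_sub_cancel, prod_append, prod_replicate, prod_cons, prod_nil,
            inv_pow]
          group
    _ = x 0 ^ m * ((x 0 ^ (m + 2))⁻¹ * x 1 * x 0 ^ (m + 2)) * (x 1 ^ (m + 1))⁻¹ := by
        rw [hconj]
    _ = l (m + 1) := by rw [l]; group

theorem reverse_prod_wordR (n : ℕ) : (wordR n).reverse.prod = r n := by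
  simp only [wordR, r, l, reverse_append, reverse_replicate, reverse_cons, reverse_nil,
    prod_append, prod_replicate, prod_cons, prod_nil, inv_pow]
  group

theorem word6_eq {n : ℕ} (hn : 1 ≤ n) : word6 n = (wordL n).map (·⁻¹) ++ wordR n := by
  obtain ⟨m, rfl⟩ : ∃ m, n = m + 1 := ⟨n - 1, by omega⟩
  simp [word6, wordL, wordR, replicate_succ (a := x 1)]

theorem length_word6 {n : ℕ} (hn : 1 ≤ n) : (word6 n).length = 4 * n + 4 := by
  rw [word6_eq hn, length_append, length_map, length_wordL hn, length_wordR]; ring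

theorem word6_subset_gens {n : ℕ} (hn : 1 ≤ n) : ∀ a ∈ word6 n, a ∈ gens := by
  simp only [word6_eq hn, mem_append, mem_map]
  rintro _ (⟨a, ha, rfl⟩ | ha)
  exacts [inv_mem_gens (wordL_subset_gens n a ha), wordR_subset_gens n _ ha]

theorem prod_reverse_take_word6_mul_l {n : ℕ} (hn : 1 ≤ n) (k : ℕ) :
    ((word6 n).take k).reverse.prod * l n =
      ((wordR n).take (k - (2 * n + 2))).reverse.prod * ((wordL n).drop k).prod := by
  rw [word6_eq hn, ← prod_wordL hn, ← length_wordL hn]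
  exact prod_reverse_take_map_inv_append_mul_prod _ _ _

theorem len_prod_reverse_take_word6_mul_l_le {n : ℕ} (hn : 1 ≤ n) (k : ℕ) :
    len (((word6 n).take k).reverse.prod * l n) ≤ 2 * n + 2 := by
  rw [prod_reverse_take_word6_mul_l hn, ← prod_append]
  refine (len_prod_le ?_).trans ?_
  · simp only [mem_append, mem_reverse]
    rintro a (ha | ha)
    exacts [wordR_subset_gens n a (mem_of_mem_take ha),
      wordL_subset_gens n a (mem_of_mem_drop ha)]
  · simp only [length_append, length_reverse, length_take, length_drop, length_wordR,
      length_wordL hn]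
    omega

/-- For `n ≥ 1` there is a path from `l` to `r` of length `4n + 4` inside `B_{2n+2}`
that passes through the identity; one such path is obtained by successively
left-multiplying `l` by the letters of
`(x₁ x₀^{n+1})(x₁⁻ⁿ x₀⁻¹)(x₁⁻¹ x₀ x₁^{n-1})(x₁ x₀^{1-n})`, read from right to left. -/
theorem path_through_identity :
    ∀ n : ℕ, 1 ≤ n →
      IsPathIn (2 * n + 2) (l n) (r n) (4 * n + 4)
        (fun k => ((word6 n).take k).reverse.prod * l n) ∧
      ∃ k ≤ 4 * n + 4, ((word6 n).take k).reverse.prod * l n = 1 := by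
  intro n hn
  have hdrop {k : ℕ} (hk : 2 * n + 2 ≤ k) : (wordL n).drop k = [] :=
    drop_eq_nil_of_le (by rw [length_wordL hn]; exact hk)
  refine ⟨⟨by simp, ?_, fun k hk => ?_, fun k _ => len_prod_reverse_take_word6_mul_l_le hn k⟩,
    2 * n + 2, by omega, ?_⟩
  · dsimp only
    rw [prod_reverse_take_word6_mul_l hn, hdrop (by omega),
      take_of_length_le (by rw [length_wordR]; omega), prod_nil, mul_one, reverse_prod_wordR]
  · rw [← length_word6 hn] at hk
    rw [prod_reverse_take_add_one_mul_inv _ _ hk]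
    exact word6_subset_gens hn _ (getElem_mem hk)
  · rw [prod_reverse_take_word6_mul_l hn, hdrop le_rfl, prod_nil, mul_one, Nat.sub_self,
      take_zero, reverse_nil, prod_nil]

end ThompsonF
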